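/- arXiv:2001.09850 — 5 statements merged into one kernel-verified Lean document; each statement's English description precedes it below -/
import Mathlib

section
/- For every v > 0, the one-dimensional projection of the rate function satisfies inf_{u>0} I(u,v) = 4·log² v. -/
open MeasureTheory ProbabilityTheory Filter Real

/-- The variational rate function `I(u,v)`: infimum of `4∫₀¹ f'(z)² dz` over absolutely
continuous `f : [0,1] → ℝ` (written as `f(z) = ∫₀ᶻ g`) with square-integrable derivative `g`,
`f(0) = 0`, `∫₀¹ e^{2 f(z)} dz = u` and `e^{f(1)} = v`. -/
noncomputable def ratefun (u v : ℝ) : ℝ :=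
  sInf {r : ℝ | ∃ g : ℝ → ℝ,
    IntervalIntegrable g volume 0 1 ∧
    IntervalIntegrable (fun z => (g z) ^ 2) volume 0 1 ∧
    (∫ z in (0:ℝ)..(1:ℝ), Real.exp (2 * ∫ t in (0:ℝ)..z, g t)) = u ∧
    Real.exp (∫ t in (0:ℝ)..(1:ℝ), g t) = v ∧
    r = 4 * ∫ z in (0:ℝ)..(1:ℝ), (g z) ^ 2}


/-!
Lower bound: by Cauchy–Schwarz `(∫₀¹ f')² ≤ ∫₀¹ f'²`, and `∫₀¹ f' = log v`, so every admissible
cost is at least `4 log² v`. Since `sInf ∅ = 0`, this bounds `I(u,v)` only once some path is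
admissible for `u`: the paths `f(z) = z log v + c (z - z²)` have `e^{f(1)} = v`, and their mass
`∫₀¹ e^{2f}` runs continuously from `0` (as `c → -∞`) to `∞` (as `c → ∞`), so it takes every
value `u > 0`. The straight path `c = 0` attains the bound.
-/

open Topology

theorem sq_intervalIntegral_le {g : ℝ → ℝ} {a b : ℝ} (hab : a ≤ b)
    (hg : IntervalIntegrable g volume a b)
    (hg2 : IntervalIntegrable (fun z => g z ^ 2) volume a b) :
    (∫ z in a..b, g z) ^ 2 ≤ (b - a) * ∫ z in a..b, g z ^ 2 := by
  have hquad (t : ℝ) :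
      0 ≤ (b - a) * (t * t) + (-2 * ∫ z in a..b, g z) * t + ∫ z in a..b, g z ^ 2 := by
    have hexpand : ∫ z in a..b, (g z - t) ^ 2
        = (b - a) * (t * t) + (-2 * ∫ z in a..b, g z) * t + ∫ z in a..b, g z ^ 2 := by
      simp_rw [sub_sq]
      have hlin := (hg.const_mul 2).mul_const t
      rw [intervalIntegral.integral_add (hg2.sub hlin) intervalIntegrable_const,
          intervalIntegral.integral_sub hg2 hlin,
          intervalIntegral.integral_mul_const, intervalIntegral.integral_const_mul,
          intervalIntegral.integral_const, smul_eq_mul]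
      ring
    exact hexpand ▸ intervalIntegral.integral_nonneg hab fun _ _ => sq_nonneg _
  have hdiscr := discrim_le_zero hquad
  rw [discrim] at hdiscr
  nlinarith

def quadPath (L c z : ℝ) : ℝ := z * L + c * (z - z ^ 2)

theorem hasDerivAt_quadPath (L c x : ℝ) :
    HasDerivAt (quadPath L c) (L + c * (1 - 2 * x)) x := by
  refine (((hasDerivAt_id' x).mul_const L).add
    (((hasDerivAt_id' x).sub (hasDerivAt_pow 2 x)).const_mul c)).congr_deriv ?_
  norm_num

theorem integral_deriv_quadPath (L c z : ℝ) :
    ∫ t in (0:ℝ)..z, (L + c * (1 - 2 * t)) = quadPath L c z := by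
  rw [intervalIntegral.integral_eq_sub_of_hasDerivAt (fun x _ => hasDerivAt_quadPath L c x)
    ((by fun_prop : Continuous fun t : ℝ => L + c * (1 - 2 * t)).intervalIntegrable _ _)]
  simp [quadPath]

theorem continuous_exp_quadPath (L c : ℝ) : Continuous fun z => exp (2 * quadPath L c z) := by
  unfold quadPath
  fun_prop

noncomputable def quadPathMass (L c : ℝ) : ℝ := ∫ z in (0:ℝ)..1, exp (2 * quadPath L c z)

theorem continuous_quadPathMass (L : ℝ) : Continuous (quadPathMass L) :=
  intervalIntegral.continuous_parametric_intervalIntegral_of_continuous'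
    (by unfold quadPath; fun_prop) 0 1

theorem quadPathMass_pos (L c : ℝ) : 0 < quadPathMass L c :=
  intervalIntegral.intervalIntegral_pos_of_pos
    ((continuous_exp_quadPath L c).intervalIntegrable _ _)
    (fun _ => exp_pos _) zero_lt_one

theorem add_le_quadPathMass (L c : ℝ) : 1 + L + c / 3 ≤ quadPathMass L c := by
  have hmean : ∫ z in (0:ℝ)..1, (1 + 2 * quadPath L c z) = 1 + L + c / 3 := by
    simp (disch := apply Continuous.intervalIntegrable; fun_prop) only [quadPath,
      intervalIntegral.integral_add, intervalIntegral.integral_sub,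
      intervalIntegral.integral_const_mul, intervalIntegral.integral_mul_const,
      intervalIntegral.integral_const, integral_pow]
    norm_num
    ring
  rw [← hmean, quadPathMass]
  refine intervalIntegral.integral_mono_on zero_le_one ?_ ?_ fun z _ => ?_
  · refine Continuous.intervalIntegrable ?_ _ _
    unfold quadPath
    fun_prop
  · exact (continuous_exp_quadPath L c).intervalIntegrable _ _
  · linarith [add_one_le_exp (2 * quadPath L c z)]

theorem tendsto_quadPathMass_atTop (L : ℝ) : Tendsto (quadPathMass L) atTop atTop := by
  refine tendsto_atTop_mono (add_le_quadPathMass L) ?_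
  exact tendsto_atTop_add_const_left _ _ (tendsto_id.atTop_div_const (by norm_num))

theorem quadPath_le_abs {L c z : ℝ} (hc : c ≤ 0) (hz : z ∈ Set.Icc (0:ℝ) 1) :
    quadPath L c z ≤ |L| := by
  have hzL : z * L ≤ |L| := by
    nlinarith [hz.1, hz.2, le_abs_self L, neg_abs_le L]
  have hbump : c * (z - z ^ 2) ≤ 0 := mul_nonpos_of_nonpos_of_nonneg hc (by nlinarith [hz.1, hz.2])
  exact (add_le_add hzL hbump).trans_eq (add_zero _)

theorem tendsto_quadPath_atBot (L : ℝ) {z : ℝ} (hz : z ∈ Set.Ioo (0:ℝ) 1) :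
    Tendsto (fun c => quadPath L c z) atBot atBot := by
  have hslope : 0 < z - z ^ 2 := by nlinarith [hz.1, hz.2]
  refine tendsto_atBot_add_const_left _ _ ?_
  simp_rw [mul_comm _ (z - z ^ 2)]
  exact tendsto_id.const_mul_atBot hslope

theorem tendsto_quadPathMass_atBot (L : ℝ) : Tendsto (quadPathMass L) atBot (𝓝 0) := by
  have hlim := intervalIntegral.tendsto_integral_filter_of_dominated_convergence
    (F := fun c z => exp (2 * quadPath L c z)) (f := 0) (l := atBot) (μ := volume) (a := 0) (b := 1)
    (fun _ => exp (2 * |L|))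
    (Eventually.of_forall fun c => (continuous_exp_quadPath L c).aestronglyMeasurable)
    ?_ intervalIntegrable_const ?_
  · simp only [Pi.zero_apply, intervalIntegral.integral_zero] at hlim
    exact hlim
  · filter_upwards [eventually_le_atBot 0] with c hc
    refine Eventually.of_forall fun z hz => ?_
    rw [Set.uIoc_of_le zero_le_one] at hz
    rw [norm_of_nonneg (exp_pos _).le, exp_le_exp]
    linarith [quadPath_le_abs (L := L) hc (Set.Ioc_subset_Icc_self hz)]
  · filter_upwards [Measure.ae_ne volume 1] with z hz1 hz
    rw [Set.uIoc_of_le zero_le_one] at hz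
    exact tendsto_exp_atBot.comp
      ((tendsto_quadPath_atBot L ⟨hz.1, hz.2.lt_of_ne hz1⟩).const_mul_atBot two_pos)

theorem exists_quadPathMass_eq (L : ℝ) {u : ℝ} (hu : 0 < u) : ∃ c, quadPathMass L c = u := by
  obtain ⟨c₁, hc₁⟩ := ((tendsto_quadPathMass_atBot L).eventually (eventually_le_nhds hu)).exists
  obtain ⟨c₂, hc₂⟩ := ((tendsto_quadPathMass_atTop L).eventually_ge_atTop u).exists
  obtain ⟨c, -, hc⟩ := intermediate_value_uIcc (continuous_quadPathMass L).continuousOn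
    (Set.Icc_subset_uIcc ⟨hc₁, hc₂⟩)
  exact ⟨c, hc⟩

def ratefunCosts (u v : ℝ) : Set ℝ :=
  {r : ℝ | ∃ g : ℝ → ℝ,
    IntervalIntegrable g volume 0 1 ∧
    IntervalIntegrable (fun z => (g z) ^ 2) volume 0 1 ∧
    (∫ z in (0:ℝ)..(1:ℝ), Real.exp (2 * ∫ t in (0:ℝ)..z, g t)) = u ∧
    Real.exp (∫ t in (0:ℝ)..(1:ℝ), g t) = v ∧
    r = 4 * ∫ z in (0:ℝ)..(1:ℝ), (g z) ^ 2}

theorem ratefun_eq_sInf (u v : ℝ) : ratefun u v = sInf (ratefunCosts u v) := rfl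

theorem four_mul_log_sq_le_of_mem_ratefunCosts {u v r : ℝ} (hr : r ∈ ratefunCosts u v) :
    4 * log v ^ 2 ≤ r := by
  obtain ⟨g, hg, hg2, -, hv, rfl⟩ := hr
  have hlog : ∫ t in (0:ℝ)..1, g t = log v := by rw [← hv, log_exp]
  have hcs := sq_intervalIntegral_le zero_le_one hg hg2
  rw [hlog, sub_zero, one_mul] at hcs
  linarith

theorem quadPath_cost_mem_ratefunCosts {v : ℝ} (hv : 0 < v) (c : ℝ) :
    4 * ∫ z in (0:ℝ)..1, (log v + c * (1 - 2 * z)) ^ 2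
      ∈ ratefunCosts (quadPathMass (log v) c) v := by
  refine ⟨fun t => log v + c * (1 - 2 * t), (by fun_prop : Continuous _).intervalIntegrable _ _,
    (by fun_prop : Continuous _).intervalIntegrable _ _, ?_, ?_, rfl⟩
  · simp only [integral_deriv_quadPath, quadPathMass]
  · rw [integral_deriv_quadPath, quadPath, exp_eq_exp.mpr (by ring), exp_log hv]

theorem four_mul_log_sq_le_ratefun {u v : ℝ} (hu : 0 < u) (hv : 0 < v) :
    4 * log v ^ 2 ≤ ratefun u v := by
  obtain ⟨c, rfl⟩ := exists_quadPathMass_eq (log v) hu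
  rw [ratefun_eq_sInf]
  exact le_csInf ⟨_, quadPath_cost_mem_ratefunCosts hv c⟩
    fun _ => four_mul_log_sq_le_of_mem_ratefunCosts

theorem ratefun_quadPathMass_zero {v : ℝ} (hv : 0 < v) :
    ratefun (quadPathMass (log v) 0) v = 4 * log v ^ 2 := by
  refine le_antisymm ?_ (four_mul_log_sq_le_ratefun (quadPathMass_pos _ _) hv)
  rw [ratefun_eq_sInf]
  refine csInf_le ⟨_, fun _ => four_mul_log_sq_le_of_mem_ratefunCosts⟩ ?_
  convert quadPath_cost_mem_ratefunCosts hv 0 using 1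
  simp

/-- One-dimensional projection: for every `v > 0`, `inf_{u>0} I(u,v) = 4 log² v`. -/
theorem ratefun_proj_v (v : ℝ) (hv : 0 < v) :
    sInf {r : ℝ | ∃ u : ℝ, 0 < u ∧ r = ratefun u v} = 4 * (Real.log v) ^ 2 := by
  refine IsLeast.csInf_eq ⟨⟨_, quadPathMass_pos _ 0, (ratefun_quadPathMass_zero hv).symm⟩, ?_⟩
  rintro _ ⟨u, hu, rfl⟩
  exact four_mul_log_sq_le_ratefun hu hv
end

section
/- Fix β > 0, ρ > 0 and ϱ ∈ [−1, 1], and set v₀ := ρ/√(2β). For n ≥ 1 and 0 ≤ k ≤ n set G_k^{(n)} := (√(2β)/n)·Σ_{j=1}^{k} U_j − βk/n², V̄_n := (ρ²/n)·Σ_{k=0}^{n−1} e^{2 G_k^{(n)}}, and X_n := √(1−ϱ²)·√(V̄_n)·Z/√n − V̄_n/2 + ϱ·v₀·(e^{G_n^{(n)}} − 1). Then X_n → −ρ²/2 almost surely as n → ∞. -/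
open MeasureTheory ProbabilityTheory Filter Real Topology

lemma gaussian_integrable_mul : Integrable (fun x : ℝ => gaussianPDFReal 0 1 x * x) := by
  have h := integrable_rpow_mul_exp_neg_mul_sq (b := 1/2) (by norm_num) (s := 1) (by norm_num)
  have h' : Integrable (fun x : ℝ => x * Real.exp (-(1/2) * x ^ 2)) := by
    simpa [Real.rpow_one] using h
  have := h'.const_mul ((Real.sqrt (2 * Real.pi))⁻¹)
  refine this.congr (Filter.Eventually.of_forall fun x => ?_)
  simp only [gaussianPDFReal]
  push_cast
  rw [mul_one, sub_zero]
  ring_nf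

lemma gaussian_withDensity :
    gaussianReal 0 1 = (volume : Measure ℝ).withDensity
      (fun x => ((gaussianPDFReal 0 1 x).toNNReal : ENNReal)) := by
  rw [gaussianReal_of_var_ne_zero 0 one_ne_zero]
  rfl

lemma gaussian_integrable_id : Integrable (fun x : ℝ => x) (gaussianReal 0 1) := by
  rw [gaussian_withDensity]
  rw [integrable_withDensity_iff ((measurable_gaussianPDFReal 0 1).real_toNNReal.coe_nnreal_ennreal)
    (Filter.Eventually.of_forall fun x => ENNReal.coe_lt_top)]
  refine gaussian_integrable_mul.congr (Filter.Eventually.of_forall fun x => ?_)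
  simp only [ENNReal.coe_toReal, Real.coe_toNNReal _ (gaussianPDFReal_nonneg 0 1 x), mul_comm]

lemma gaussian_pdf_odd (x : ℝ) :
    gaussianPDFReal 0 1 (-x) * (-x) = -(gaussianPDFReal 0 1 x * x) := by
  simp only [gaussianPDFReal]
  rw [sub_zero, sub_zero, neg_sq]
  ring

lemma gaussian_integral_id : ∫ x, x ∂(gaussianReal 0 1) = 0 := by
  rw [gaussian_withDensity]
  rw [integral_withDensity_eq_integral_smul ((measurable_gaussianPDFReal 0 1).real_toNNReal) (fun x : ℝ => x)]
  have h : ∫ x : ℝ, (gaussianPDFReal 0 1 x).toNNReal • x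
      = ∫ x : ℝ, gaussianPDFReal 0 1 x * x := by
    congr 1
    funext x
    rw [NNReal.smul_def, smul_eq_mul, Real.coe_toNNReal _ (gaussianPDFReal_nonneg 0 1 x)]
  rw [h]
  have hemb : MeasurableEmbedding fun x : ℝ => -x :=
    (Homeomorph.neg ℝ).isClosedEmbedding.measurableEmbedding
  have h2 : ∫ x : ℝ, gaussianPDFReal 0 1 x * x
      = ∫ x : ℝ, gaussianPDFReal 0 1 (-x) * (-x) := by
    conv_lhs => rw [← Measure.map_neg_eq_self (volume : Measure ℝ)]
    exact hemb.integral_map _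
  have h3 : ∫ x : ℝ, gaussianPDFReal 0 1 (-x) * (-x)
      = - ∫ x : ℝ, gaussianPDFReal 0 1 x * x := by
    rw [← integral_neg]
    congr 1
    funext x
    exact gaussian_pdf_odd x
  linarith [h2, h3]

lemma max_bound (S : ℕ → ℝ) (hS : Tendsto (fun k : ℕ => S k / k) atTop (𝓝 0)) :
    ∀ ε > 0, ∀ᶠ n : ℕ in atTop, ∀ k ≤ n, |S k| ≤ ε * n := by
  intro ε hε
  rw [Metric.tendsto_atTop] at hS
  obtain ⟨N, hN⟩ := hS ε hε
  set C : ℝ := ∑ j ∈ Finset.range (N + 1), |S j| with hC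
  have hCk : ∀ k ≤ N, |S k| ≤ C := fun k hk =>
    Finset.single_le_sum (fun i _ => abs_nonneg (S i)) (Finset.mem_range.mpr (by omega))
  filter_upwards [eventually_ge_atTop (N + 1), eventually_ge_atTop ⌈C / ε⌉₊] with n hn1 hn2
  intro k hk
  rcases le_or_gt k N with h | h
  · have h1 : C ≤ ε * n := by
      have : (C / ε : ℝ) ≤ n := le_trans (Nat.le_ceil _) (by exact_mod_cast hn2)
      calc C = (C / ε) * ε := by field_simp
        _ ≤ n * ε := by nlinarith
        _ = ε * n := mul_comm _ _
    exact le_trans (hCk k h) h1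
  · have hk0 : (0 : ℝ) < k := by exact_mod_cast (by omega : 0 < k)
    have := hN k (by omega)
    rw [Real.dist_eq, sub_zero, abs_div, abs_of_pos (by exact_mod_cast hk0 : (0:ℝ) < (k:ℝ))] at this
    have h1 : |S k| < ε * k := by
      rw [div_lt_iff₀ hk0] at this; linarith [this]
    have h2 : (k : ℝ) ≤ n := by exact_mod_cast hk
    nlinarith

lemma det_limit (β ρ ϱ v₀ z : ℝ) (hβ : 0 < β) (hρ : 0 < ρ)
    (S : ℕ → ℝ) (hS : ∀ ε > 0, ∀ᶠ n : ℕ in atTop, ∀ k ≤ n, |S k| ≤ ε * n)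
    (g : ℕ → ℕ → ℝ)
    (hg : ∀ n k, g n k = Real.sqrt (2 * β) / n * S k - β * k / (n : ℝ) ^ 2)
    (V : ℕ → ℝ)
    (hV : ∀ n, V n = ρ ^ 2 / n * ∑ k ∈ Finset.range n, Real.exp (2 * g n k)) :
    Tendsto (fun n : ℕ => Real.sqrt (1 - ϱ ^ 2) * Real.sqrt (V n) * z / Real.sqrt n
      - V n / 2 + ϱ * v₀ * (Real.exp (g n n) - 1)) atTop (𝓝 (-ρ ^ 2 / 2)) := by
  obtain ⟨c, hc⟩ : ∃ c : ℝ, c = Real.sqrt (2 * β) := ⟨_, rfl⟩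
  have hg' : ∀ n k : ℕ, g n k = c / n * S k - β * k / (n : ℝ) ^ 2 := by
    intro n k; rw [hc]; exact hg n k
  have hcpos : 0 < c := hc ▸ Real.sqrt_pos.mpr (by linarith)
  -- uniform smallness of g
  have hgu : ∀ δ > 0, ∀ᶠ n : ℕ in atTop, ∀ k ≤ n, |g n k| ≤ δ := by
    intro δ hδ
    filter_upwards [hS (δ / (2 * c)) (by positivity), eventually_ge_atTop ⌈2 * β / δ⌉₊,
      eventually_ge_atTop 1] with n hn hn2 hn1
    intro k hk
    have hn0 : (0 : ℝ) < n := by exact_mod_cast hn1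
    have hkn : (k : ℝ) ≤ n := by exact_mod_cast hk
    have h1 : |c / n * S k| ≤ δ / 2 := by
      rw [abs_mul, abs_div, abs_of_pos hcpos, abs_of_pos hn0]
      have := hn k hk
      calc c / n * |S k| ≤ c / n * (δ / (2 * c) * n) := by
            apply mul_le_mul_of_nonneg_left this (by positivity)
        _ = δ / 2 := by field_simp
    have h2 : |β * k / (n : ℝ) ^ 2| ≤ δ / 2 := by
      have hbn : (2 * β / δ : ℝ) ≤ n := le_trans (Nat.le_ceil _) (by exact_mod_cast hn2)
      rw [abs_of_nonneg (by positivity)]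
      rw [div_le_iff₀ (by positivity)]
      calc β * k ≤ β * n := by nlinarith
        _ = δ / 2 * (2 * β / δ * n) := by field_simp
        _ ≤ δ / 2 * ((n:ℝ) * n) := mul_le_mul_of_nonneg_left
            (mul_le_mul_of_nonneg_right hbn hn0.le) (by positivity)
        _ = δ / 2 * (n : ℝ) ^ 2 := by ring
    calc |g n k| = |c / n * S k - β * k / (n : ℝ) ^ 2| := by rw [hg']
      _ ≤ |c / n * S k| + |β * k / (n : ℝ) ^ 2| := abs_sub _ _
      _ ≤ δ := by linarith
  -- convergence of V to ρ²
  have hVt : Tendsto V atTop (𝓝 (ρ ^ 2)) := by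
    rw [Metric.tendsto_nhds]
    intro ε hε
    obtain ⟨a, ha⟩ : ∃ a : ℝ, a = 1 + ε / (2 * ρ ^ 2) := ⟨_, rfl⟩
    have hρ0 : ρ ≠ 0 := ne_of_gt hρ
    have ha1 : 1 < a := by
      have h0 : 0 < ε / (2 * ρ ^ 2) := by positivity
      rw [ha]; linarith
    obtain ⟨δ, hδdef⟩ : ∃ δ : ℝ, δ = Real.log a / 2 := ⟨_, rfl⟩
    have hδ : 0 < δ := by
      have := Real.log_pos ha1; rw [hδdef]; linarith
    filter_upwards [hgu δ hδ, eventually_ge_atTop 1] with n hn hn1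
    have hn0 : (0 : ℝ) < n := by exact_mod_cast hn1
    have hexp : Real.exp (2 * δ) = a := by
      rw [hδdef]; rw [show 2 * (Real.log a / 2) = Real.log a by ring]
      exact Real.exp_log (by linarith)
    have hlow : ∀ k ∈ Finset.range n, Real.exp (-(2*δ)) ≤ Real.exp (2 * g n k) := by
      intro k hk
      apply Real.exp_le_exp.mpr
      have := abs_le.mp (hn k (le_of_lt (Finset.mem_range.mp hk)))
      linarith [this.1]
    have hhigh : ∀ k ∈ Finset.range n, Real.exp (2 * g n k) ≤ Real.exp (2*δ) := by
      intro k hk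
      apply Real.exp_le_exp.mpr
      have := abs_le.mp (hn k (le_of_lt (Finset.mem_range.mp hk)))
      linarith [this.2]
    have hsum_low : (n : ℝ) * Real.exp (-(2*δ)) ≤ ∑ k ∈ Finset.range n, Real.exp (2 * g n k) := by
      have := Finset.card_nsmul_le_sum (Finset.range n) (fun k => Real.exp (2 * g n k))
        (Real.exp (-(2*δ))) hlow
      simpa [nsmul_eq_mul] using this
    have hsum_high : ∑ k ∈ Finset.range n, Real.exp (2 * g n k) ≤ (n : ℝ) * Real.exp (2*δ) := by
      have := Finset.sum_le_card_nsmul (Finset.range n) (fun k => Real.exp (2 * g n k))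
        (Real.exp (2*δ)) hhigh
      simpa [nsmul_eq_mul] using this
    have hVlow : ρ ^ 2 * Real.exp (-(2*δ)) ≤ V n := by
      rw [hV]
      calc ρ ^ 2 * Real.exp (-(2*δ)) = ρ ^ 2 / n * ((n:ℝ) * Real.exp (-(2*δ))) := by
            field_simp
        _ ≤ _ := by apply mul_le_mul_of_nonneg_left hsum_low (by positivity)
    have hVhigh : V n ≤ ρ ^ 2 * Real.exp (2*δ) := by
      rw [hV]
      calc ρ ^ 2 / n * ∑ k ∈ Finset.range n, Real.exp (2 * g n k)
          ≤ ρ ^ 2 / n * ((n:ℝ) * Real.exp (2*δ)) := by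
            apply mul_le_mul_of_nonneg_left hsum_high (by positivity)
        _ = ρ ^ 2 * Real.exp (2*δ) := by field_simp
    rw [Real.dist_eq, abs_lt]
    have hexpneg : Real.exp (-(2*δ)) = a⁻¹ := by rw [← hexp, Real.exp_neg]
    have hainv : a * a⁻¹ = 1 := mul_inv_cancel₀ (by linarith)
    constructor
    · -- -ε < V n - ρ²  i.e. ρ² - V n < ε
      rw [hexpneg] at hVlow
      have hainvpos : 0 < a⁻¹ := by positivity
      have hainvle : a⁻¹ ≤ 1 := by nlinarith [hainv, hainvpos, ha1]
      have h4 : ρ ^ 2 * (a - 1) = ε / 2 := by rw [ha]; field_simp; ring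
      have h5 : ρ ^ 2 * (1 - a⁻¹) = ε / 2 * a⁻¹ := by
        have hne : a ≠ 0 := by linarith
        field_simp at h4 ⊢
        nlinarith [h4]
      have h6 : ρ ^ 2 - ρ ^ 2 * a⁻¹ = ρ ^ 2 * (1 - a⁻¹) := by ring
      have h7 : ε / 2 * a⁻¹ ≤ ε / 2 :=
        mul_le_of_le_one_right (by positivity) hainvle
      linarith
    · rw [hexp] at hVhigh
      have h8 : ρ ^ 2 * a = ρ ^ 2 + ε / 2 := by rw [ha]; field_simp
      nlinarith
  -- g n n → 0
  have hgn : Tendsto (fun n : ℕ => g n n) atTop (𝓝 0) := by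
    rw [Metric.tendsto_nhds]
    intro ε hε
    filter_upwards [hgu (ε / 2) (half_pos hε)] with n hn
    rw [Real.dist_eq, sub_zero]
    exact lt_of_le_of_lt (hn n le_rfl) (by linarith)
  -- sqrt n → ∞
  have hsqrtn : Tendsto (fun n : ℕ => Real.sqrt n) atTop atTop := by
    rw [tendsto_atTop_atTop]
    intro b
    refine ⟨⌈b ^ 2⌉₊, fun n hn => ?_⟩
    have h1 : (b ^ 2 : ℝ) ≤ n := le_trans (Nat.le_ceil _) (by exact_mod_cast hn)
    calc b ≤ |b| := le_abs_self b
      _ = Real.sqrt (b ^ 2) := (Real.sqrt_sq_eq_abs b).symm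
      _ ≤ Real.sqrt n := Real.sqrt_le_sqrt h1
  have t1 : Tendsto (fun n : ℕ => Real.sqrt (1 - ϱ ^ 2) * Real.sqrt (V n) * z / Real.sqrt n)
      atTop (𝓝 0) := by
    have hsV : Tendsto (fun n => Real.sqrt (V n)) atTop (𝓝 ρ) := by
      have := (Real.continuous_sqrt.tendsto (ρ ^ 2)).comp hVt
      rwa [Real.sqrt_sq hρ.le] at this
    have hinv : Tendsto (fun n : ℕ => (Real.sqrt n)⁻¹) atTop (𝓝 0) :=
      hsqrtn.inv_tendsto_atTop
    have := ((tendsto_const_nhds (x := Real.sqrt (1 - ϱ ^ 2))).mul hsV).mul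
      ((tendsto_const_nhds (x := z)).mul hinv)
    simp only [mul_zero] at this
    refine this.congr' (Filter.Eventually.of_forall fun n => ?_)
    show _ = √(1 - ϱ ^ 2) * √(V n) * z / √(n:ℝ)
    rw [div_eq_mul_inv]
    ring
  have t3 : Tendsto (fun n : ℕ => ϱ * v₀ * (Real.exp (g n n) - 1)) atTop (𝓝 0) := by
    have := ((Real.continuous_exp.tendsto 0).comp hgn).sub (tendsto_const_nhds (x := (1:ℝ)))
    rw [Real.exp_zero, sub_self] at this
    have h2 := (tendsto_const_nhds (x := ϱ * v₀)).mul this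
    simpa using h2
  have total := (t1.sub (hVt.div_const 2)).add t3
  rw [zero_sub, add_zero] at total
  have heq : -ρ ^ 2 / 2 = -(ρ ^ 2 / 2) := by ring
  rw [heq]
  exact total

/-- Almost sure limit of the normalized log asset price of the time-discretized log-normal
SABR model: `X_n → −ρ²/2` a.s.  Here `(W j)_{j≥0}` is an i.i.d. sequence of standard normal
random variables; `Z := W 0` plays the role of the extra standard normal independent of the
sequence `(U_j)_{j≥1} := (W j)_{j≥1}`. -/
theorem sabr_log_price_as_limit
    {Ω : Type*} [MeasurableSpace Ω] (P : Measure Ω) [IsProbabilityMeasure P]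
    (W : ℕ → Ω → ℝ) (hmeas : ∀ j, Measurable (W j))
    (hindep : iIndepFun W P)
    (hdist : ∀ j, Measure.map (W j) P = gaussianReal 0 1)
    (β ρ ϱ : ℝ) (hβ : 0 < β) (hρ : 0 < ρ) (hϱ : ϱ ∈ Set.Icc (-1 : ℝ) 1)
    (v₀ : ℝ) (hv₀ : v₀ = ρ / Real.sqrt (2 * β))
    (G : ℕ → ℕ → Ω → ℝ)
    (hG : ∀ n k ω, G n k ω =
      Real.sqrt (2 * β) / n * ∑ j ∈ Finset.Icc 1 k, W j ω - β * k / (n : ℝ) ^ 2)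
    (Vbar : ℕ → Ω → ℝ)
    (hV : ∀ n ω, Vbar n ω = ρ ^ 2 / n * ∑ k ∈ Finset.range n, Real.exp (2 * G n k ω))
    (X : ℕ → Ω → ℝ)
    (hX : ∀ n ω, X n ω =
      Real.sqrt (1 - ϱ ^ 2) * Real.sqrt (Vbar n ω) * W 0 ω / Real.sqrt n
        - Vbar n ω / 2 + ϱ * v₀ * (Real.exp (G n n ω) - 1)) :
    ∀ᵐ ω ∂P, Filter.Tendsto (fun n => X n ω) Filter.atTop (nhds (-ρ ^ 2 / 2)) := by
  set Y : ℕ → Ω → ℝ := fun i ω => W (i + 1) ω with hY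
  have hint1 : Integrable (Y 0) P := by
    have h1 : Integrable (fun x : ℝ => x) (Measure.map (W 1) P) := by
      rw [hdist 1]; exact gaussian_integrable_id
    exact (integrable_map_measure aestronglyMeasurable_id
      (hmeas 1).aemeasurable).mp h1
  have hpair : Pairwise (Function.onFun (IndepFun · · P) Y) := fun i j hij =>
    hindep.indepFun (by omega : i + 1 ≠ j + 1)
  have hident : ∀ i, IdentDistrib (Y i) (Y 0) P P := fun i =>
    ⟨(hmeas _).aemeasurable, (hmeas _).aemeasurable, by
      show Measure.map (W (i + 1)) P = Measure.map (W 1) P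
      rw [hdist, hdist]⟩
  have hmean : (∫ a, Y 0 a ∂P) = 0 := by
    have h1 : (∫ x : ℝ, x ∂(Measure.map (W 1) P)) = ∫ a, W 1 a ∂P :=
      integral_map (hmeas 1).aemeasurable aestronglyMeasurable_id
    have h2 : (∫ x : ℝ, x ∂(Measure.map (W 1) P)) = 0 := by
      rw [hdist 1]; exact gaussian_integral_id
    have h3 : (∫ a, Y 0 a ∂P) = ∫ a, W 1 a ∂P := rfl
    rw [h3, ← h1, h2]
  have hslln := strong_law_ae_real Y hint1 hpair hident
  rw [hmean] at hslln
  filter_upwards [hslln] with ω hω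
  have hsum : ∀ k : ℕ, ∑ i ∈ Finset.range k, Y i ω = ∑ j ∈ Finset.Icc 1 k, W j ω := by
    intro k
    rw [← Finset.Ico_add_one_right_eq_Icc, Finset.sum_Ico_eq_sum_range]
    exact Finset.sum_congr rfl fun i _ => by
      show W (i + 1) ω = W (1 + i) ω
      rw [Nat.add_comm]
  have hS : Tendsto (fun k : ℕ => (∑ j ∈ Finset.Icc 1 k, W j ω) / k) atTop (𝓝 0) :=
    hω.congr fun k => by rw [hsum k]
  have hSb := max_bound _ hS
  have hfin := det_limit β ρ ϱ v₀ (W 0 ω) hβ hρ _ hSb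
    (fun n k => G n k ω) (fun n k => hG n k ω)
    (fun n => Vbar n ω) (fun n => hV n ω)
  exact hfin.congr fun n => (hX n ω).symm
end

section
/- Let ϱ ∈ [−1, 0] and a > 0. Then inf_{u>0, v>0} { (1/2)·I(u,v) + a·ϱ²·u − 2ϱ·√(2a)·(v − 1) } = 0, and the infimum is attained at some point (u_m, v_m) ∈ (0,∞)². -/
/-!
Put `c = ϱ √(2a) / 2`, so that the objective is `½ I(u,v) + 2c²u - 4c(v - 1)`. For an admissible
path `f = ∫ g`, expanding `0 ≤ ∫₀¹ (g - c e^f)²` with the chain rule `∫₀¹ g e^f = e^{f(1)} - 1`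
gives `4∫₀¹ g² ≥ 8c(v - 1) - 4c²u`, so the objective is nonnegative. Equality holds along
`g = c e^f`, i.e. `e^{-f(z)} = 1 - cz`, which has `u = v = 1/(1 - c)`.

The lower bound on `I(u,v)` needs the infimum to be over a nonempty set (`sInf ∅ = 0`): every
`(u, v)` is reached by some `f(z) = z log v + θ z (1 - z)`, by the intermediate value theorem in `θ`.
-/

open MeasureTheory ProbabilityTheory Filter Real

open Set intervalIntegral Topology NNReal

theorem LipschitzOnWith.comp_absolutelyContinuousOnInterval {X Y : Type*} [PseudoMetricSpace X]
    [PseudoMetricSpace Y] {φ : X → Y} {K : ℝ≥0} {s : Set X} {f : ℝ → X} {a b : ℝ}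
    (hφ : LipschitzOnWith K φ s) (hf : AbsolutelyContinuousOnInterval f a b)
    (hfs : MapsTo f (uIcc a b) s) : AbsolutelyContinuousOnInterval (φ ∘ f) a b := by
  unfold AbsolutelyContinuousOnInterval at hf ⊢
  have hK := hf.const_mul (K : ℝ)
  rw [mul_zero] at hK
  refine squeeze_zero' (Eventually.of_forall fun _ ↦ Finset.sum_nonneg fun _ _ ↦ dist_nonneg) ?_ hK
  filter_upwards [mem_inf_of_right (mem_principal_self _)] with E hE
  rw [Finset.mul_sum]
  exact Finset.sum_le_sum fun i hi ↦
    hφ.dist_le_mul _ (hfs (hE.1 i hi).1) _ (hfs (hE.1 i hi).2)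

theorem integral_mul_exp_primitive {g : ℝ → ℝ} {a b : ℝ} (hg : IntervalIntegrable g volume a b) :
    ∫ x in a..b, g x * exp (∫ t in a..x, g t) = exp (∫ t in a..b, g t) - 1 := by
  set F : ℝ → ℝ := fun x ↦ ∫ t in a..x, g t
  have hF : AbsolutelyContinuousOnInterval F a b :=
    hg.absolutelyContinuousOnInterval_intervalIntegral left_mem_uIcc
  obtain ⟨M, hM⟩ := isCompact_uIcc.exists_bound_of_continuousOn hF.continuousOn
  obtain ⟨K, hK⟩ := contDiff_exp.contDiffOn.exists_lipschitzOnWith one_ne_zero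
    (convex_Icc (-M) M) isCompact_Icc
  have hexpF : AbsolutelyContinuousOnInterval (exp ∘ F) a b :=
    hK.comp_absolutelyContinuousOnInterval hF fun x hx ↦ abs_le.mp (hM x hx)
  have hderiv : ∀ᵐ x, x ∈ uIoc a b → deriv (exp ∘ F) x = g x * exp (F x) := by
    filter_upwards [hg.ae_hasDerivAt_integral] with x hx hxab
    exact ((hx (uIoc_subset_uIcc hxab) a left_mem_uIcc).exp).deriv.trans (mul_comm _ _)
  rw [← integral_congr_ae hderiv, hexpF.integral_deriv_eq_sub]
  simp [F]

/-- `g` is admissible in the infimum defining `ratefun u v`. -/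
structure IsRatePath (u v : ℝ) (g : ℝ → ℝ) : Prop where
  intervalIntegrable : IntervalIntegrable g volume 0 1
  intervalIntegrable_sq : IntervalIntegrable (fun z ↦ g z ^ 2) volume 0 1
  integral_exp : (∫ z in (0:ℝ)..1, exp (2 * ∫ t in (0:ℝ)..z, g t)) = u
  exp_integral : exp (∫ t in (0:ℝ)..1, g t) = v

theorem IsRatePath.two_mul_sub_one_le {u v : ℝ} {g : ℝ → ℝ} (hg : IsRatePath u v g) (c : ℝ) :
    2 * c * (v - 1) ≤ (∫ z in (0:ℝ)..1, g z ^ 2) + c ^ 2 * u := by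
  rw [← hg.integral_exp, ← hg.exp_integral]
  have hg2 := hg.intervalIntegrable_sq
  replace hg := hg.intervalIntegrable
  set F : ℝ → ℝ := fun z ↦ ∫ t in (0:ℝ)..z, g t
  have hF : ContinuousOn F (uIcc 0 1) := continuousOn_primitive_interval' hg left_mem_uIcc
  have hgF : IntervalIntegrable (fun z ↦ 2 * c * (g z * exp (F z))) volume 0 1 :=
    (hg.mul_continuousOn (continuous_exp.comp_continuousOn hF)).const_mul _
  have hF2 : IntervalIntegrable (fun z ↦ c ^ 2 * exp (2 * F z)) volume 0 1 :=
    (continuousOn_const.mul (continuous_exp.comp_continuousOn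
      (continuousOn_const.mul hF))).intervalIntegrable
  have hsq : 0 ≤ ∫ z in (0:ℝ)..1, g z ^ 2 + c ^ 2 * exp (2 * F z) - 2 * c * (g z * exp (F z)) :=
    integral_nonneg zero_le_one fun z _ ↦ by
      rw [two_mul, exp_add]
      nlinarith [sq_nonneg (g z - c * exp (F z))]
  rw [integral_sub (hg2.add hF2) hgF, integral_add hg2 hF2, intervalIntegral.integral_const_mul,
    intervalIntegral.integral_const_mul, integral_mul_exp_primitive hg] at hsq
  linarith

section Minimizer

variable {c : ℝ}

theorem one_sub_mul_pos (hc : c < 1) {t : ℝ} (ht : t ∈ uIcc 0 1) : 0 < 1 - c * t := by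
  rw [uIcc_of_le zero_le_one] at ht
  rcases le_total 0 c with h | h <;> nlinarith [ht.1, ht.2]

theorem continuousOn_inv_one_sub_mul (hc : c < 1) :
    ContinuousOn (fun t ↦ (1 - c * t)⁻¹) (uIcc 0 1) :=
  ContinuousOn.inv₀ (by fun_prop) fun _ ht ↦ (one_sub_mul_pos hc ht).ne'

theorem integral_div_one_sub_mul (hc : c < 1) {z : ℝ} (hz : z ∈ uIcc 0 1) :
    ∫ t in (0:ℝ)..z, c / (1 - c * t) = -log (1 - c * z) := by
  have hsub : uIcc 0 z ⊆ uIcc 0 1 := uIcc_subset_uIcc_left hz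
  have hderiv : ∀ t ∈ uIcc 0 z, HasDerivAt (fun t ↦ -log (1 - c * t)) (c / (1 - c * t)) t :=
    fun t ht ↦ by
      simpa [neg_div] using ((((hasDerivAt_id t).const_mul c).const_sub 1).log
        (one_sub_mul_pos hc (hsub ht)).ne').fun_neg
  rw [integral_eq_sub_of_hasDerivAt hderiv
    ((continuousOn_const.mul (continuousOn_inv_one_sub_mul hc)).mono hsub).intervalIntegrable]
  simp

theorem integral_inv_one_sub_mul_sq (hc : c < 1) :
    ∫ z in (0:ℝ)..1, ((1 - c * z)⁻¹) ^ 2 = (1 - c)⁻¹ := by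
  have hderiv : ∀ z ∈ uIcc (0:ℝ) 1,
      HasDerivAt (fun z ↦ z * (1 - c * z)⁻¹) (((1 - c * z)⁻¹) ^ 2) z := fun z hz ↦ by
    have hpos := one_sub_mul_pos hc hz
    refine ((hasDerivAt_id' z).mul ((((hasDerivAt_id' z).const_mul c).const_sub 1).inv
      hpos.ne')).congr_deriv ?_
    simp only [Pi.inv_apply]
    field_simp
    ring
  rw [integral_eq_sub_of_hasDerivAt hderiv
    ((continuousOn_inv_one_sub_mul hc).pow 2).intervalIntegrable]
  simp

theorem isRatePath_div_one_sub_mul (hc : c < 1) :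
    IsRatePath (1 - c)⁻¹ (1 - c)⁻¹ fun t ↦ c / (1 - c * t) where
  intervalIntegrable :=
    (continuousOn_const.mul (continuousOn_inv_one_sub_mul hc)).intervalIntegrable
  intervalIntegrable_sq :=
    ((continuousOn_const.mul (continuousOn_inv_one_sub_mul hc)).pow 2).intervalIntegrable
  integral_exp := by
    rw [← integral_inv_one_sub_mul_sq hc]
    refine integral_congr fun z hz ↦ ?_
    simp only [integral_div_one_sub_mul hc hz, mul_neg, exp_neg, two_mul, exp_add,
      exp_log (one_sub_mul_pos hc hz), sq, mul_inv]
  exp_integral := by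
    rw [integral_div_one_sub_mul hc right_mem_uIcc, exp_neg, mul_one, exp_log (by linarith)]

theorem integral_div_one_sub_mul_sq (hc : c < 1) :
    ∫ z in (0:ℝ)..1, (c / (1 - c * z)) ^ 2 = c ^ 2 * (1 - c)⁻¹ := by
  simp only [div_eq_mul_inv, mul_pow, intervalIntegral.integral_const_mul,
    integral_inv_one_sub_mul_sq hc]

end Minimizer

/-- `∫₀¹ e^{2f}` for the path `f(z) = b z + θ z (1 - z)`. -/
noncomputable def bridgeMass (b θ : ℝ) : ℝ :=
  ∫ z in (0:ℝ)..1, exp (2 * (b * z + θ * (z - z ^ 2)))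

theorem integral_add_mul_one_sub_two_mul (b θ z : ℝ) :
    ∫ t in (0:ℝ)..z, (b + θ * (1 - 2 * t)) = b * z + θ * (z - z ^ 2) := by
  have hderiv (t : ℝ) :
      HasDerivAt (fun t ↦ b * t + θ * (t - t ^ 2)) (b + θ * (1 - 2 * t)) t :=
    (((hasDerivAt_id' t).const_mul b).add
      (((hasDerivAt_id' t).sub (hasDerivAt_pow 2 t)).const_mul θ)).congr_deriv (by simp)
  rw [integral_eq_sub_of_hasDerivAt (fun t _ ↦ hderiv t)
    ((by fun_prop : Continuous _).intervalIntegrable _ _)]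
  ring

theorem continuous_bridgeMass (b : ℝ) : Continuous (bridgeMass b) := by
  unfold bridgeMass
  fun_prop

theorem add_le_bridgeMass (b θ : ℝ) : 1 + b + θ / 3 ≤ bridgeMass b θ := by
  have hderiv (z : ℝ) : HasDerivAt (fun z ↦ z + b * z ^ 2 + θ * (z ^ 2 - 2 / 3 * z ^ 3))
      (2 * (b * z + θ * (z - z ^ 2)) + 1) z :=
    (((hasDerivAt_id' z).add ((hasDerivAt_pow 2 z).const_mul b)).add
      (((hasDerivAt_pow 2 z).sub ((hasDerivAt_pow 3 z).const_mul (2 / 3))).const_mul θ)).congr_deriv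
      (by norm_num; ring)
  have hpoly : ∫ z in (0:ℝ)..1, (2 * (b * z + θ * (z - z ^ 2)) + 1) = 1 + b + θ / 3 := by
    rw [integral_eq_sub_of_hasDerivAt (fun z _ ↦ hderiv z)
      ((by fun_prop : Continuous _).intervalIntegrable _ _)]
    ring
  rw [← hpoly]
  exact integral_mono_on zero_le_one ((by fun_prop : Continuous _).intervalIntegrable _ _)
    ((by fun_prop : Continuous _).intervalIntegrable _ _) fun z _ ↦ add_one_le_exp _

theorem tendsto_bridgeMass_atBot (b : ℝ) : Tendsto (bridgeMass b) atBot (𝓝 0) := by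
  have hlim : ∀ z ∈ Ioo (0:ℝ) 1,
      Tendsto (fun θ ↦ exp (2 * (b * z + θ * (z - z ^ 2)))) atBot (𝓝 0) := fun z hz ↦
    have hzz : 0 < z - z ^ 2 := by nlinarith [hz.1, hz.2]
    tendsto_exp_atBot.comp <| (tendsto_atBot_add_const_left _ _ <|
      tendsto_id.atBot_mul_const hzz).const_mul_atBot two_pos
  have hne : ∀ᵐ z : ℝ, z ≠ 1 := by simp [ae_iff, measure_singleton]
  have h := tendsto_integral_filter_of_dominated_convergence (f := fun _ ↦ 0)
    (fun _ ↦ exp (2 * |b|))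
    (Eventually.of_forall fun θ ↦ (by fun_prop :
      Continuous fun z : ℝ ↦ exp (2 * (b * z + θ * (z - z ^ 2)))).aestronglyMeasurable)
    (by
      filter_upwards [eventually_le_atBot 0] with θ hθ
      filter_upwards with z hz
      rw [uIoc_of_le zero_le_one] at hz
      rw [norm_of_nonneg (exp_pos _).le, exp_le_exp]
      have hzz : 0 ≤ z - z ^ 2 := by nlinarith [hz.1, hz.2]
      nlinarith [mul_le_mul_of_nonneg_right (le_abs_self b) hz.1.le, abs_nonneg b,
        mul_nonpos_of_nonpos_of_nonneg hθ hzz, hz.2])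
    intervalIntegrable_const
    (by
      filter_upwards [hne] with z hz1 hz
      rw [uIoc_of_le zero_le_one] at hz
      exact hlim z ⟨hz.1, lt_of_le_of_ne hz.2 hz1⟩)
  rwa [intervalIntegral.integral_zero] at h

theorem exists_isRatePath {u v : ℝ} (hu : 0 < u) (hv : 0 < v) : ∃ g, IsRatePath u v g := by
  obtain ⟨θ, hθ⟩ : u ∈ range (bridgeMass (log v)) :=
    mem_range_of_exists_le_of_exists_ge (continuous_bridgeMass _)
      (((tendsto_bridgeMass_atBot _).eventually (gt_mem_nhds hu)).exists.imp fun _ ↦ le_of_lt)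
      ⟨3 * (u - 1 - log v), by linarith [add_le_bridgeMass (log v) (3 * (u - 1 - log v))]⟩
  have hprim := integral_add_mul_one_sub_two_mul (log v) θ
  exact ⟨fun t ↦ log v + θ * (1 - 2 * t),
    { intervalIntegrable := (by fun_prop : Continuous _).intervalIntegrable _ _
      intervalIntegrable_sq := (by fun_prop : Continuous _).intervalIntegrable _ _
      integral_exp := by simp only [hprim]; exact hθ
      exp_integral := by rw [hprim]; simp [exp_log hv] }⟩

theorem ratefun_le {u v : ℝ} {g : ℝ → ℝ} (hg : IsRatePath u v g) :
    ratefun u v ≤ 4 * ∫ z in (0:ℝ)..1, g z ^ 2 :=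
  csInf_le ⟨0, by
    rintro _ ⟨g, -, -, -, -, rfl⟩
    exact mul_nonneg zero_le_four (integral_nonneg zero_le_one fun _ _ ↦ sq_nonneg _)⟩
    ⟨g, hg.1, hg.2, hg.3, hg.4, rfl⟩

theorem le_ratefun {u v r : ℝ} (hne : ∃ g, IsRatePath u v g)
    (h : ∀ g, IsRatePath u v g → r ≤ 4 * ∫ z in (0:ℝ)..1, g z ^ 2) : r ≤ ratefun u v := by
  obtain ⟨g, hg⟩ := hne
  exact le_csInf ⟨_, g, hg.1, hg.2, hg.3, hg.4, rfl⟩ fun _ ⟨g, h1, h2, h3, h4, hr⟩ ↦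
    hr ▸ h g ⟨h1, h2, h3, h4⟩

theorem ratefun_objective_nonneg (c : ℝ) {u v : ℝ} (hu : 0 < u) (hv : 0 < v) :
    0 ≤ 1 / 2 * ratefun u v + 2 * c ^ 2 * u - 4 * c * (v - 1) := by
  have := le_ratefun (r := 4 * (2 * c * (v - 1) - c ^ 2 * u)) (exists_isRatePath hu hv)
    fun g hg ↦ by linarith [hg.two_mul_sub_one_le c]
  linarith

theorem ratefun_inv_one_sub {c : ℝ} (hc : c < 1) :
    ratefun (1 - c)⁻¹ (1 - c)⁻¹ = 4 * (c ^ 2 * (1 - c)⁻¹) := by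
  refine le_antisymm ?_ (le_ratefun ⟨_, isRatePath_div_one_sub_mul hc⟩ fun g hg ↦ ?_)
  · exact integral_div_one_sub_mul_sq hc ▸ ratefun_le (isRatePath_div_one_sub_mul hc)
  · have hm : (1 - c)⁻¹ - 1 = c * (1 - c)⁻¹ := by
      have : 1 - c ≠ 0 := by linarith
      field_simp
      ring
    have := hg.two_mul_sub_one_le c
    rw [hm] at this
    linarith

theorem ratefun_objective_inv_one_sub {c : ℝ} (hc : c < 1) :
    1 / 2 * ratefun (1 - c)⁻¹ (1 - c)⁻¹ + 2 * c ^ 2 * (1 - c)⁻¹ - 4 * c * ((1 - c)⁻¹ - 1) = 0 := by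
  rw [ratefun_inv_one_sub hc]
  have : 1 - c ≠ 0 := by linarith
  field_simp
  ring

/-- For `ϱ ∈ [−1,0]` and `a > 0`,
`inf_{u,v>0} { (1/2) I(u,v) + a ϱ² u − 2ϱ√(2a)(v−1) } = 0`, and the infimum is attained at
some `(u_m, v_m) ∈ (0,∞)²`. -/
theorem ratefun_martingale_inf (ϱ a : ℝ) (hϱ : ϱ ∈ Set.Icc (-1 : ℝ) 0) (ha : 0 < a) :
    sInf {r : ℝ | ∃ u v : ℝ, 0 < u ∧ 0 < v ∧
        r = (1 / 2) * ratefun u v + a * ϱ ^ 2 * u - 2 * ϱ * Real.sqrt (2 * a) * (v - 1)} = 0 ∧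
    ∃ um vm : ℝ, 0 < um ∧ 0 < vm ∧
      (1 / 2) * ratefun um vm + a * ϱ ^ 2 * um - 2 * ϱ * Real.sqrt (2 * a) * (vm - 1) = 0 := by
  set c := ϱ * √(2 * a) / 2 with hc_def
  have hc : c < 1 := by
    have : c ≤ 0 := div_nonpos_of_nonpos_of_nonneg
      (mul_nonpos_of_nonpos_of_nonneg hϱ.2 (sqrt_nonneg _)) zero_le_two
    linarith
  have hquad : a * ϱ ^ 2 = 2 * c ^ 2 := by
    rw [hc_def, div_pow, mul_pow, sq_sqrt (by positivity)]
    ring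
  have hlin : 2 * ϱ * √(2 * a) = 4 * c := by rw [hc_def]; ring
  have hm : 0 < (1 - c)⁻¹ := inv_pos.2 (by linarith)
  have hmin := ratefun_objective_inv_one_sub hc
  simp only [hquad, hlin]
  refine ⟨IsLeast.csInf_eq ⟨⟨_, _, hm, hm, hmin.symm⟩, ?_⟩, _, _, hm, hm, hmin⟩
  rintro r ⟨u, v, hu, hv, rfl⟩
  exact ratefun_objective_nonneg c hu hv
end

section
/- Let a > 0. In the zero-correlation case the rate function satisfies the symmetry relation J_X(y; a, 0) − J_X(−y; a, 0) = 2ay for every y ∈ ℝ. -/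
/-!
Only the penalty term `(a/u)(y + u/2)²` depends on `y`, and
`(a/u)(y + u/2)² - (a/u)(-y + u/2)² = 2ay` for every `u ≠ 0`. Hence the set of values minimised
in `J_X(y)` is the translate by `2ay` of the one minimised in `J_X(-y)`, and since both are
bounded below by `0` (as `I ≥ 0`), their infima differ by `2ay`.
-/

open MeasureTheory ProbabilityTheory Filter Real

lemma ratefun_nonneg (u v : ℝ) : 0 ≤ ratefun u v := by
  apply Real.sInf_nonneg
  rintro r ⟨g, -, -, -, -, rfl⟩
  have : 0 ≤ ∫ z in (0:ℝ)..1, g z ^ 2 :=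
    intervalIntegral.integral_nonneg zero_le_one fun z _ => sq_nonneg _
  positivity

lemma div_mul_add_half_sq (a y : ℝ) {u : ℝ} (hu : u ≠ 0) :
    a / u * (y + u / 2) ^ 2 = a / u * (-y + u / 2) ^ 2 + 2 * a * y := by
  field_simp
  ring

/-- `J_X(y; a, 0)` is the infimum of this set. -/
def jxObjectiveValues (a y : ℝ) : Set ℝ :=
  {r : ℝ | ∃ u v : ℝ, 0 < u ∧ 0 < v ∧ r = (1 / 2) * ratefun u v + (a / u) * (y + u / 2) ^ 2}

lemma jxObjectiveValues_nonempty (a y : ℝ) : (jxObjectiveValues a y).Nonempty :=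
  ⟨_, 1, 1, one_pos, one_pos, rfl⟩

lemma jxObjectiveValues_bddBelow {a : ℝ} (ha : 0 ≤ a) (y : ℝ) :
    BddBelow (jxObjectiveValues a y) := by
  refine ⟨0, ?_⟩
  rintro r ⟨u, v, hu, -, rfl⟩
  have := ratefun_nonneg u v
  positivity

lemma jxObjectiveValues_eq_image_add (a y : ℝ) :
    jxObjectiveValues a y = (· + 2 * a * y) '' jxObjectiveValues a (-y) := by
  ext r
  constructor
  · rintro ⟨u, v, hu, hv, rfl⟩
    exact ⟨_, ⟨u, v, hu, hv, rfl⟩, by rw [div_mul_add_half_sq a y hu.ne']; ring⟩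
  · rintro ⟨_, ⟨u, v, hu, hv, rfl⟩, rfl⟩
    exact ⟨u, v, hu, hv, by rw [div_mul_add_half_sq a y hu.ne']; ring⟩

lemma sInf_jxObjectiveValues_sub_neg {a : ℝ} (ha : 0 ≤ a) (y : ℝ) :
    sInf (jxObjectiveValues a y) - sInf (jxObjectiveValues a (-y)) = 2 * a * y := by
  have h := (OrderIso.addRight (2 * a * y)).map_csInf' (jxObjectiveValues_nonempty a (-y))
    (jxObjectiveValues_bddBelow ha (-y))
  rw [jxObjectiveValues_eq_image_add a y]
  simp only [OrderIso.addRight_apply] at h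
  linarith

/-- Symmetry relation of the zero-correlation rate function:
`J_X(y;a,0) − J_X(−y;a,0) = 2ay`. -/
theorem ratefun_JX_symmetry (a : ℝ) (ha : 0 < a)
    (JX : ℝ → ℝ)
    (hJX : ∀ y : ℝ, JX y =
      sInf {r : ℝ | ∃ u v : ℝ, 0 < u ∧ 0 < v ∧
        r = (1 / 2) * ratefun u v + (a / u) * (y + u / 2) ^ 2}) :
    ∀ y : ℝ, JX y - JX (-y) = 2 * a * y := by
  intro y
  rw [hJX y, hJX (-y)]
  exact sInf_jxObjectiveValues_sub_neg ha.le y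
end

section
/- Let a > 0. Then the at-the-money zero-correlation rate function has the closed form J_X(0; a, 0) = inf_{u>0, v>0} { (1/2)·I(u,v) + a·u/4 } = 2λ·(2·tan λ − λ), where λ ∈ (0, π/2) is the unique solution of λ²/cos²λ = a/8. -/
open MeasureTheory ProbabilityTheory Filter Real

/-!
For `F(z) = ∫₀ᶻ g` the quantity to minimise is `2∫₀¹ g² + (a/4)∫₀¹ e^{2F}` with `F(1)` free. Its
Euler–Lagrange equation `F'' = (a/8) e^{2F}`, `F(0) = 0`, `F'(1) = 0` is solved by
`F = log cos λ - log cos (λ(1 - z))` exactly when `λ²/cos²λ = a/8`. Writing an arbitrary `g` as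
`F' + k`, convexity of `x ↦ x²` and of `exp` bounds the functional below by its linearisation at
the minimiser, and the first-order term integrates by parts to `F'(1) ∫₀¹ k = 0`. Since every pair
`u, v > 0` is realised by some path, `(1/2) I(u,v) + a u/4` is bounded below by the value
`2λ(2 tan λ - λ)` of the minimiser, which it attains.
-/

open Set Topology

theorem integral_deriv_mul_primitive_add_mul {ψ ψ' k : ℝ → ℝ} {a b : ℝ}
    (hψ : ∀ x ∈ uIcc a b, HasDerivAt ψ (ψ' x) x) (hψ' : ContinuousOn ψ' (uIcc a b))
    (hk : IntervalIntegrable k volume a b) :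
    ∫ x in a..b, ψ' x * (∫ t in a..x, k t) + ψ x * k x = ψ b * ∫ t in a..b, k t := by
  obtain ⟨C, hC⟩ := isCompact_uIcc.exists_bound_of_continuousOn hψ'
  have hψAC : AbsolutelyContinuousOnInterval ψ a b :=
    ((convex_uIcc a b).lipschitzOnWith_of_nnnorm_hasDerivWithin_le (C := C.toNNReal)
      (fun x hx => (hψ x hx).hasDerivWithinAt)
      (fun x hx => by simpa [← NNReal.coe_le_coe] using (hC x hx).trans (le_max_left C 0)))
      |>.absolutelyContinuousOnInterval
  have hKAC := hk.absolutelyContinuousOnInterval_intervalIntegral (c := a) left_mem_uIcc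
  have hparts := hψAC.integral_deriv_mul_eq_sub hKAC
  simp only [intervalIntegral.integral_same, mul_zero, sub_zero] at hparts
  rw [← hparts]
  refine intervalIntegral.integral_congr_ae ?_
  filter_upwards [hk.ae_hasDerivAt_integral] with x hK hx
  have hx' := uIoc_subset_uIcc hx
  rw [(hψ x hx').deriv, (hK hx' a left_mem_uIcc).deriv]

theorem strictMonoOn_sq_div_cos_sq : StrictMonoOn (fun x => x ^ 2 / cos x ^ 2) (Ico 0 (π / 2)) := by
  intro x hx y hy hxy
  have hcy : 0 < cos y := cos_pos_of_mem_Ioo ⟨by linarith [hy.1, pi_pos], hy.2⟩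
  have hcyx : cos y < cos x := cos_lt_cos_of_nonneg_of_le_pi_div_two hx.1 hy.2.le hxy
  simp only [← div_pow]
  exact pow_lt_pow_left₀ (div_lt_div₀ hxy hcyx.le (hx.1.trans hxy.le) hcy)
    (div_nonneg hx.1 (hcy.trans hcyx).le) two_ne_zero

theorem tendsto_sq_div_cos_sq : Tendsto (fun x => x ^ 2 / cos x ^ 2) (𝓝[<] (π / 2)) atTop := by
  simp only [← div_pow]
  refine (tendsto_pow_atTop two_ne_zero).comp ?_
  simp only [div_eq_mul_inv]
  exact Tendsto.pos_mul_atTop (by linarith [pi_pos]) (tendsto_nhdsWithin_of_tendsto_nhds tendsto_id)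
    tendsto_cos_pi_div_two.inv_tendsto_nhdsGT_zero

theorem existsUnique_sq_div_cos_sq_eq {c : ℝ} (hc : 0 < c) :
    ∃! x, x ∈ Ioo 0 (π / 2) ∧ x ^ 2 / cos x ^ 2 = c := by
  have hpi := pi_pos
  obtain ⟨b, hcb, hb⟩ := ((tendsto_sq_div_cos_sq.eventually_ge_atTop c).and
    (Ioo_mem_nhdsLT (show 0 < π / 2 by positivity))).exists
  have hcont : ContinuousOn (fun x => x ^ 2 / cos x ^ 2) (Icc 0 b) := by
    refine ContinuousOn.div (by fun_prop) (by fun_prop) fun x hx => ?_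
    exact pow_ne_zero 2 (cos_pos_of_mem_Ioo ⟨by linarith [hx.1], by linarith [hx.2, hb.2]⟩).ne'
  obtain ⟨x, hx, hxc⟩ := intermediate_value_Icc hb.1.le hcont ⟨by simpa using hc.le, hcb⟩
  have hx0 : x ≠ 0 := by rintro rfl; exact hc.ne' (by simpa using hxc.symm)
  refine ⟨x, ⟨⟨lt_of_le_of_ne hx.1 (Ne.symm hx0), by linarith [hx.2, hb.2]⟩, hxc⟩, ?_⟩
  rintro y ⟨hy, hyc⟩
  exact strictMonoOn_sq_div_cos_sq.injOn (Ioo_subset_Ico_self hy)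
    ⟨hx.1, by linarith [hx.2, hb.2]⟩ (hyc.trans hxc.symm)

/-- The minimiser `f*`; `optSlope lam = f*'` and `f*'' = f*'² + λ² = (λ/cos λ)² e^{2f*}`. -/
noncomputable def optPath (lam z : ℝ) : ℝ := log (cos lam) - log (cos (lam * (1 - z)))

noncomputable def optSlope (lam z : ℝ) : ℝ := -(lam * tan (lam * (1 - z)))

section optimizer

variable {lam z : ℝ}

theorem cos_mul_one_sub_pos (hlam : |lam| < π / 2) (hz : z ∈ Icc (0 : ℝ) 1) :
    0 < cos (lam * (1 - z)) := by
  refine cos_pos_of_mem_Ioo (abs_lt.mp (lt_of_le_of_lt ?_ hlam))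
  rw [abs_mul, abs_of_nonneg (sub_nonneg.mpr hz.2)]
  exact mul_le_of_le_one_right (abs_nonneg lam) (by linarith [hz.1])

theorem hasDerivAt_mul_one_sub (lam z : ℝ) : HasDerivAt (fun z => lam * (1 - z)) (-lam) z := by
  simpa using ((hasDerivAt_id z).const_sub 1).const_mul lam

theorem hasDerivAt_optPath (hlam : |lam| < π / 2) (hz : z ∈ Icc (0 : ℝ) 1) :
    HasDerivAt (optPath lam) (optSlope lam z) z := by
  have hc := cos_mul_one_sub_pos hlam hz
  refine ((((hasDerivAt_cos _).comp z (hasDerivAt_mul_one_sub lam z)).log hc.ne').const_sub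
    (log (cos lam))).congr_deriv ?_
  rw [optSlope, tan_eq_sin_div_cos, Function.comp_apply]
  field_simp

theorem hasDerivAt_optSlope (hlam : |lam| < π / 2) (hz : z ∈ Icc (0 : ℝ) 1) :
    HasDerivAt (optSlope lam) (optSlope lam z ^ 2 + lam ^ 2) z := by
  have hc := cos_mul_one_sub_pos hlam hz
  refine (((hasDerivAt_tan hc.ne').comp z (hasDerivAt_mul_one_sub lam z)).const_mul lam).neg
    |>.congr_deriv ?_
  rw [optSlope, tan_eq_sin_div_cos]
  field_simp
  linear_combination -lam ^ 2 * sin_sq_add_cos_sq (lam * (1 - z))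

theorem continuousOn_optSlope (hlam : |lam| < π / 2) : ContinuousOn (optSlope lam) (Icc 0 1) :=
  fun _ hz => (hasDerivAt_optSlope hlam hz).continuousAt.continuousWithinAt

theorem continuousOn_optSlope_sq_add (hlam : |lam| < π / 2) :
    ContinuousOn (fun z => optSlope lam z ^ 2 + lam ^ 2) (Icc 0 1) :=
  ((continuousOn_optSlope hlam).pow 2).add continuousOn_const

theorem integral_optSlope (hlam : |lam| < π / 2) (hz : z ∈ Icc (0 : ℝ) 1) :
    ∫ t in (0 : ℝ)..z, optSlope lam t = optPath lam z := by
  have hsub : uIcc 0 z ⊆ Icc (0 : ℝ) 1 := by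
    rw [uIcc_of_le hz.1]; exact Icc_subset_Icc_right hz.2
  rw [intervalIntegral.integral_eq_sub_of_hasDerivAt
    (fun x hx => hasDerivAt_optPath hlam (hsub hx))
    ((continuousOn_optSlope hlam).mono hsub).intervalIntegrable]
  simp [optPath]

theorem integral_optSlope_sq_add (hlam : |lam| < π / 2) :
    ∫ z in (0 : ℝ)..1, optSlope lam z ^ 2 + lam ^ 2 = lam * tan lam := by
  have h01 : uIcc (0 : ℝ) 1 = Icc 0 1 := uIcc_of_le zero_le_one
  rw [intervalIntegral.integral_eq_sub_of_hasDerivAt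
    (fun x hx => hasDerivAt_optSlope hlam (h01 ▸ hx))
    (h01 ▸ continuousOn_optSlope_sq_add hlam).intervalIntegrable]
  simp [optSlope]

theorem sq_div_cos_sq_mul_exp_optPath (hlam : |lam| < π / 2) (hz : z ∈ Icc (0 : ℝ) 1) :
    (lam / cos lam) ^ 2 * exp (2 * optPath lam z) = optSlope lam z ^ 2 + lam ^ 2 := by
  have hc := cos_mul_one_sub_pos hlam hz
  have hc0 : 0 < cos lam := by simpa using cos_mul_one_sub_pos hlam (left_mem_Icc.mpr zero_le_one)
  rw [optPath, optSlope, mul_sub, exp_sub, ← log_rpow hc0, ← log_rpow hc, exp_log (by positivity),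
    exp_log (by positivity), tan_eq_sin_div_cos]
  norm_cast
  field_simp
  linear_combination -lam ^ 2 * sin_sq_add_cos_sq (lam * (1 - z))

theorem sq_div_cos_sq_mul_exp_integral (hlam : |lam| < π / 2) {g : ℝ → ℝ}
    (hg : IntervalIntegrable g volume 0 1) (hz : z ∈ Icc (0 : ℝ) 1) :
    (lam / cos lam) ^ 2 * exp (2 * ∫ t in (0 : ℝ)..z, g t)
      = (optSlope lam z ^ 2 + lam ^ 2) * exp (2 * ∫ t in (0 : ℝ)..z, (g t - optSlope lam t)) := by
  have hsub : uIcc 0 z ⊆ Icc (0 : ℝ) 1 := by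
    rw [uIcc_of_le hz.1]; exact Icc_subset_Icc_right hz.2
  have hsub' : uIcc 0 z ⊆ uIcc (0 : ℝ) 1 := uIcc_of_le (zero_le_one (α := ℝ)) ▸ hsub
  rw [intervalIntegral.integral_sub (hg.mono_set hsub')
    ((continuousOn_optSlope hlam).mono hsub).intervalIntegrable, integral_optSlope hlam hz,
    ← sq_div_cos_sq_mul_exp_optPath hlam hz, mul_assoc, ← exp_add]
  ring_nf

end optimizer

noncomputable def atmEnergy (a : ℝ) (g : ℝ → ℝ) : ℝ :=
  (1 / 2) * (4 * ∫ z in (0 : ℝ)..1, g z ^ 2)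
    + a * (∫ z in (0 : ℝ)..1, exp (2 * ∫ t in (0 : ℝ)..z, g t)) / 4

section energy

variable {a lam : ℝ}

theorem le_atmEnergy (hlam : |lam| < π / 2) (heq : lam ^ 2 / cos lam ^ 2 = a / 8) {g : ℝ → ℝ}
    (hg : IntervalIntegrable g volume 0 1)
    (hg2 : IntervalIntegrable (fun z => g z ^ 2) volume 0 1) :
    2 * lam * (2 * tan lam - lam) ≤ atmEnergy a g := by
  have h01 : uIcc (0 : ℝ) 1 = Icc 0 1 := uIcc_of_le zero_le_one
  set φ := optSlope lam
  set ψ := fun z => optSlope lam z ^ 2 + lam ^ 2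
  set k := fun z => g z - φ z
  set K := fun x => ∫ t in (0 : ℝ)..x, k t
  have hφ : ContinuousOn φ (uIcc 0 1) := h01 ▸ continuousOn_optSlope hlam
  have hψ : ContinuousOn ψ (uIcc 0 1) := h01 ▸ continuousOn_optSlope_sq_add hlam
  have hk : IntervalIntegrable k volume 0 1 := hg.sub hφ.intervalIntegrable
  have hK : ContinuousOn K (uIcc 0 1) :=
    intervalIntegral.continuousOn_primitive_interval' hk left_mem_uIcc
  -- `g ↦ g²` and `exp` lie above their tangents at the optimiser `φ`, `K = 0`.
  have hpoint : ∀ z ∈ uIcc (0 : ℝ) 1, 4 * ψ z - 2 * lam ^ 2 + 4 * (ψ z * K z + φ z * k z)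
      ≤ 2 * g z ^ 2 + a / 4 * exp (2 * ∫ t in (0 : ℝ)..z, g t) := by
    intro z hz
    rw [show a / 4 = 2 * (lam / cos lam) ^ 2 by rw [div_pow, heq]; ring, mul_assoc,
      sq_div_cos_sq_mul_exp_integral hlam hg (h01 ▸ hz)]
    have hexp := mul_le_mul_of_nonneg_left (add_one_le_exp (2 * K z))
      (by positivity : 0 ≤ ψ z)
    nlinarith [sq_nonneg (k z)]
  have hparts : ∫ z in (0 : ℝ)..1, ψ z * K z + φ z * k z = 0 := by
    rw [integral_deriv_mul_primitive_add_mul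
      (fun x hx => hasDerivAt_optSlope hlam (h01 ▸ hx)) hψ hk]
    simp [optSlope]
  have hL : IntervalIntegrable (fun z => 4 * ψ z - 2 * lam ^ 2) volume 0 1 :=
    (hψ.intervalIntegrable.const_mul 4).sub intervalIntegrable_const
  have hM : IntervalIntegrable (fun z => ψ z * K z + φ z * k z) volume 0 1 :=
    (hψ.mul hK).intervalIntegrable.add (hk.continuousOn_mul hφ)
  have hexpF : IntervalIntegrable (fun z => exp (2 * ∫ t in (0 : ℝ)..z, g t)) volume 0 1 :=
    (continuous_exp.comp_continuousOn (continuousOn_const.mul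
      (intervalIntegral.continuousOn_primitive_interval' hg left_mem_uIcc))).intervalIntegrable
  calc 2 * lam * (2 * tan lam - lam)
      = ∫ z in (0 : ℝ)..1, 4 * ψ z - 2 * lam ^ 2 + 4 * (ψ z * K z + φ z * k z) := by
        rw [intervalIntegral.integral_add hL (hM.const_mul 4), intervalIntegral.integral_sub
          (hψ.intervalIntegrable.const_mul 4) intervalIntegrable_const]
        simp only [intervalIntegral.integral_const_mul, hparts, ψ, integral_optSlope_sq_add hlam,
          intervalIntegral.integral_const, sub_zero, smul_eq_mul, one_mul, mul_zero, add_zero]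
        ring
    _ ≤ ∫ z in (0 : ℝ)..1, 2 * g z ^ 2 + a / 4 * exp (2 * ∫ t in (0 : ℝ)..z, g t) :=
        intervalIntegral.integral_mono_on zero_le_one (hL.add (hM.const_mul 4))
          ((hg2.const_mul 2).add (hexpF.const_mul _)) fun z hz => hpoint z (h01 ▸ hz)
    _ = atmEnergy a g := by
        rw [intervalIntegral.integral_add (hg2.const_mul 2) (hexpF.const_mul _),
          intervalIntegral.integral_const_mul, intervalIntegral.integral_const_mul, atmEnergy]
        ring

theorem sq_div_cos_sq_mul_integral_exp_optSlope (hlam : |lam| < π / 2) :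
    (lam / cos lam) ^ 2 * ∫ z in (0 : ℝ)..1, exp (2 * ∫ t in (0 : ℝ)..z, optSlope lam t)
      = lam * tan lam := by
  rw [← intervalIntegral.integral_const_mul, ← integral_optSlope_sq_add hlam]
  refine intervalIntegral.integral_congr fun z hz => ?_
  rw [uIcc_of_le zero_le_one] at hz
  simp only [integral_optSlope hlam hz, sq_div_cos_sq_mul_exp_optPath hlam hz]

theorem atmEnergy_optSlope (hlam : |lam| < π / 2) (heq : lam ^ 2 / cos lam ^ 2 = a / 8) :
    atmEnergy a (optSlope lam) = 2 * lam * (2 * tan lam - lam) := by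
  have hφ2 : IntervalIntegrable (fun z => optSlope lam z ^ 2) volume 0 1 :=
    ((continuousOn_optSlope hlam).pow 2).intervalIntegrable_of_Icc zero_le_one
  have hsq := integral_optSlope_sq_add hlam
  rw [intervalIntegral.integral_add hφ2 intervalIntegrable_const] at hsq
  have hexp := sq_div_cos_sq_mul_integral_exp_optSlope hlam
  rw [div_pow, heq] at hexp
  rw [atmEnergy]
  simp only [intervalIntegral.integral_const, sub_zero, smul_eq_mul, one_mul] at hsq
  linear_combination 2 * hsq + 2 * hexp

end energy

theorem ratefun_le_s17 {g : ℝ → ℝ} (hg : IntervalIntegrable g volume 0 1)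
    (hg2 : IntervalIntegrable (fun z => g z ^ 2) volume 0 1) :
    ratefun (∫ z in (0 : ℝ)..1, exp (2 * ∫ t in (0 : ℝ)..z, g t)) (exp (∫ t in (0 : ℝ)..1, g t))
      ≤ 4 * ∫ z in (0 : ℝ)..1, g z ^ 2 := by
  refine csInf_le ⟨0, ?_⟩ ⟨g, hg, hg2, rfl, rfl, rfl⟩
  rintro r ⟨g, -, -, -, -, rfl⟩
  have := intervalIntegral.integral_nonneg (μ := volume) zero_le_one fun z _ => sq_nonneg (g z)
  positivity

theorem integral_affine_slope (c s z : ℝ) :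
    ∫ t in (0 : ℝ)..z, (c + s * (1 - 2 * t)) = c * z + s * (z - z ^ 2) := by
  have hderiv (x : ℝ) : HasDerivAt (fun z => c * z + s * (z - z ^ 2)) (c + s * (1 - 2 * x)) x := by
    refine (((hasDerivAt_id x).const_mul c).add
      (((hasDerivAt_id x).sub (hasDerivAt_pow 2 x)).const_mul s)).congr_deriv ?_
    norm_num
  rw [intervalIntegral.integral_eq_sub_of_hasDerivAt (fun x _ => hderiv x)
    (Continuous.intervalIntegrable (by fun_prop) _ _)]
  ring

theorem continuous_integral_exp_quadratic (c : ℝ) :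
    Continuous fun s => ∫ z in (0 : ℝ)..1, exp (2 * (c * z + s * (z - z ^ 2))) := by
  fun_prop

theorem add_div_three_le_integral_exp_quadratic (c s : ℝ) :
    1 + c + s / 3 ≤ ∫ z in (0 : ℝ)..1, exp (2 * (c * z + s * (z - z ^ 2))) := by
  have hderiv (x : ℝ) : HasDerivAt (fun z => z + c * z ^ 2 + s * (z ^ 2 - 2 / 3 * z ^ 3))
      (2 * (c * x + s * (x - x ^ 2)) + 1) x := by
    refine (((hasDerivAt_id x).add ((hasDerivAt_pow 2 x).const_mul c)).add
      (((hasDerivAt_pow 2 x).sub ((hasDerivAt_pow 3 x).const_mul (2 / 3))).const_mul s))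
      |>.congr_deriv ?_
    norm_num
    ring
  calc 1 + c + s / 3 = ∫ z in (0 : ℝ)..1, 2 * (c * z + s * (z - z ^ 2)) + 1 := by
        rw [intervalIntegral.integral_eq_sub_of_hasDerivAt (fun x _ => hderiv x)
          (Continuous.intervalIntegrable (by fun_prop) _ _)]
        ring
    _ ≤ _ := intervalIntegral.integral_mono_on zero_le_one
        (Continuous.intervalIntegrable (by fun_prop) _ _)
        (Continuous.intervalIntegrable (by fun_prop) _ _) fun z _ => add_one_le_exp _

theorem tendsto_integral_exp_quadratic_atBot (c : ℝ) :
    Tendsto (fun s => ∫ z in (0 : ℝ)..1, exp (2 * (c * z + s * (z - z ^ 2)))) atBot (𝓝 0) := by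
  have hlim := intervalIntegral.tendsto_integral_filter_of_dominated_convergence (μ := volume)
    (a := 0) (b := 1) (l := atBot) (F := fun s z => exp (2 * (c * z + s * (z - z ^ 2))))
    (f := fun _ => 0) (fun _ => exp (2 * |c|))
    (.of_forall fun s => (by fun_prop : Continuous _).aestronglyMeasurable) ?bound
    intervalIntegrable_const ?lim
  · simpa using hlim
  case bound =>
    filter_upwards [eventually_le_atBot 0] with s hs
    refine .of_forall fun z hz => ?_
    rw [uIoc_of_le zero_le_one] at hz
    have hz' : 0 ≤ z - z ^ 2 := by nlinarith [hz.1, hz.2]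
    rw [norm_of_nonneg (exp_pos _).le, exp_le_exp]
    nlinarith [le_abs_self c, neg_abs_le c, hz.1, hz.2, mul_nonpos_of_nonpos_of_nonneg hs hz']
  case lim =>
    filter_upwards [Measure.ae_ne volume 1] with z hz1 hz
    rw [uIoc_of_le zero_le_one] at hz
    have hpos : 0 < 2 * (z - z ^ 2) := by nlinarith [hz.1, lt_of_le_of_ne hz.2 hz1]
    refine tendsto_exp_atBot.comp ?_
    refine (tendsto_atBot_add_const_left _ (2 * (c * z)) (tendsto_id.atBot_mul_const hpos)).congr
      fun s => ?_
    simp only [id]; ring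

-- Paths of slope `log v + s (1 - 2z)`; `s` is tuned by the intermediate value theorem. Without this
-- the constraint sets of `ratefun` could be empty, and `sInf ∅ = 0`.
theorem exists_intervalIntegrable_integral_exp_eq {u v : ℝ} (hu : 0 < u) (hv : 0 < v) :
    ∃ g : ℝ → ℝ, IntervalIntegrable g volume 0 1 ∧
      IntervalIntegrable (fun z => g z ^ 2) volume 0 1 ∧
      ∫ z in (0 : ℝ)..1, exp (2 * ∫ t in (0 : ℝ)..z, g t) = u ∧
      exp (∫ t in (0 : ℝ)..1, g t) = v := by
  set c := log v
  obtain ⟨s₁, hs₁⟩ := ((tendsto_integral_exp_quadratic_atBot c).eventually_lt_const hu).exists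
  obtain ⟨s, hs⟩ := intermediate_value_univ s₁ (3 * (u - 1 - c))
    (continuous_integral_exp_quadratic c)
    ⟨hs₁.le, by linarith [add_div_three_le_integral_exp_quadratic c (3 * (u - 1 - c))]⟩
  refine ⟨fun z => c + s * (1 - 2 * z), Continuous.intervalIntegrable (by fun_prop) _ _,
    Continuous.intervalIntegrable (by fun_prop) _ _, ?_, ?_⟩
  · simpa only [integral_affine_slope] using hs
  · simp [integral_affine_slope, c, exp_log hv]

theorem le_ratefun_s17 {u v b : ℝ} (hu : 0 < u) (hv : 0 < v)
    (h : ∀ g : ℝ → ℝ, IntervalIntegrable g volume 0 1 →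
      IntervalIntegrable (fun z => g z ^ 2) volume 0 1 →
      ∫ z in (0 : ℝ)..1, exp (2 * ∫ t in (0 : ℝ)..z, g t) = u →
      b ≤ 4 * ∫ z in (0 : ℝ)..1, g z ^ 2) :
    b ≤ ratefun u v := by
  obtain ⟨g, hg, hg2, hgu, hgv⟩ := exists_intervalIntegrable_integral_exp_eq hu hv
  exact le_csInf ⟨_, g, hg, hg2, hgu, hgv, rfl⟩
    fun r ⟨g, hg, hg2, hgu, _, hr⟩ => hr ▸ h g hg hg2 hgu

theorem isLeast_half_ratefun_add {a lam : ℝ} (hlam : lam ∈ Ioo 0 (π / 2))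
    (heq : lam ^ 2 / cos lam ^ 2 = a / 8) :
    IsLeast {r : ℝ | ∃ u v : ℝ, 0 < u ∧ 0 < v ∧ r = (1 / 2) * ratefun u v + a * u / 4}
      (2 * lam * (2 * tan lam - lam)) := by
  have habs : |lam| < π / 2 := abs_lt.mpr ⟨by linarith [hlam.1, pi_pos], hlam.2⟩
  have hlower (u v : ℝ) (hu : 0 < u) (hv : 0 < v) :
      2 * lam * (2 * tan lam - lam) ≤ (1 / 2) * ratefun u v + a * u / 4 := by
    have hrate := le_ratefun_s17 (b := 2 * (2 * lam * (2 * tan lam - lam) - a * u / 4)) hu hv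
      fun g hg hg2 hgu => by
        have hg_energy := le_atmEnergy habs heq hg hg2
        rw [atmEnergy, hgu] at hg_energy
        linarith
    linarith
  refine ⟨?_, fun r ⟨u, v, hu, hv, hr⟩ => hr ▸ hlower u v hu hv⟩
  have hφ : IntervalIntegrable (optSlope lam) volume 0 1 :=
    (continuousOn_optSlope habs).intervalIntegrable_of_Icc zero_le_one
  have hφ2 : IntervalIntegrable (fun z => optSlope lam z ^ 2) volume 0 1 :=
    ((continuousOn_optSlope habs).pow 2).intervalIntegrable_of_Icc zero_le_one
  have hu₀ : 0 < ∫ z in (0 : ℝ)..1, exp (2 * ∫ t in (0 : ℝ)..z, optSlope lam t) := by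
    have htan := mul_pos hlam.1 (tan_pos_of_pos_of_lt_pi_div_two hlam.1 hlam.2)
    rw [← sq_div_cos_sq_mul_integral_exp_optSlope habs] at htan
    exact pos_of_mul_pos_right htan (sq_nonneg _)
  refine ⟨_, exp (∫ t in (0 : ℝ)..1, optSlope lam t), hu₀, exp_pos _,
    le_antisymm (hlower _ _ hu₀ (exp_pos _)) ?_⟩
  have hupper := ratefun_le_s17 hφ hφ2
  have hopt := atmEnergy_optSlope habs heq
  rw [atmEnergy] at hopt
  linarith

/-- Closed form of the at-the-money zero-correlation rate function:
`J_X(0;a,0) = inf_{u,v>0} { (1/2) I(u,v) + a u/4 } = 2λ(2 tan λ − λ)`, where `λ ∈ (0,π/2)` is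
the unique solution of `λ²/cos²λ = a/8`. -/
theorem ratefun_JX_atm (a : ℝ) (ha : 0 < a)
    (JX : ℝ → ℝ)
    (hJX : ∀ y : ℝ, JX y =
      sInf {r : ℝ | ∃ u v : ℝ, 0 < u ∧ 0 < v ∧
        r = (1 / 2) * ratefun u v + (a / u) * (y + u / 2) ^ 2}) :
    JX 0 = sInf {r : ℝ | ∃ u v : ℝ, 0 < u ∧ 0 < v ∧
        r = (1 / 2) * ratefun u v + a * u / 4} ∧
    (∃! lam : ℝ, lam ∈ Set.Ioo 0 (Real.pi / 2) ∧ lam ^ 2 / Real.cos lam ^ 2 = a / 8) ∧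
    (∀ lam : ℝ, lam ∈ Set.Ioo 0 (Real.pi / 2) → lam ^ 2 / Real.cos lam ^ 2 = a / 8 →
      JX 0 = 2 * lam * (2 * Real.tan lam - lam)) := by
  have hJX0 : JX 0 = sInf {r : ℝ | ∃ u v : ℝ, 0 < u ∧ 0 < v ∧
      r = (1 / 2) * ratefun u v + a * u / 4} := by
    rw [hJX 0]
    congr 1
    ext r
    refine exists₂_congr fun u v => and_congr_right fun hu => and_congr_right fun _ => ?_
    rw [show a / u * (0 + u / 2) ^ 2 = a * u / 4 by field_simp; ring]
  refine ⟨hJX0, existsUnique_sq_div_cos_sq_eq (by positivity), fun lam hlam heq => ?_⟩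
  rw [hJX0, (isLeast_half_ratefun_add hlam heq).csInf_eq]
end
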